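/- arXiv:2307.14275 — 6 statements merged into one kernel-verified Lean document; each statement's English description precedes it below -/
import Mathlib

section
/- Let P₁, P₂ be pastures with distinguished elements ε₁, ε₂. A map of sets f : P₁ → P₂ is a pasture morphism if and only if f(0) = 0, f(ε₁) = ε₂, f restricts to a group homomorphism P₁× → P₂×, and (f(x), f(y)) ∈ FP(P₂) for every (x,y) ∈ FP(P₁). -/
/-- A *pasture*: a commutative monoid with absorbing zero whose nonzero elements form an
abelian group (i.e. a `CommGroupWithZero`), together with a nullset `null ⊆ P³` satisfying
(P1) `(1,0,0) ∉ null`, (P2) there is a unique `e` with `(1,e,0) ∈ null`, and (P3) `null` is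
closed under the action of `S₃ × P` (encoded via the two generating transpositions together
with simultaneous scaling). -/
structure Pasture where
  carrier : Type*
  [str : CommGroupWithZero carrier]
  null : Set (carrier × carrier × carrier)
  one_zero_zero_not_mem : ((1 : carrier), (0 : carrier), (0 : carrier)) ∉ null
  epsilon_existsUnique : ∃! e : carrier, ((1 : carrier), e, (0 : carrier)) ∈ null
  swap_left_mem : ∀ {a b c : carrier}, (a, b, c) ∈ null → (b, a, c) ∈ null
  swap_right_mem : ∀ {a b c : carrier}, (a, b, c) ∈ null → (a, c, b) ∈ null
  scale_mem : ∀ {a b c : carrier} (p : carrier), (a, b, c) ∈ null → (a * p, b * p, c * p) ∈ null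

attribute [instance] Pasture.str


/-- The distinguished element `ε` of a pasture. -/
noncomputable def Pasture.eps (P : Pasture) : P.carrier := P.epsilon_existsUnique.choose

/-- The set of fundamental pairs of a pasture: pairs `(x, y)` of nonzero elements with
`(x, y, ε) ∈ N_P`. -/
def Pasture.FP (P : Pasture) : Set (P.carrier × P.carrier) :=
  {p | p.1 ≠ 0 ∧ p.2 ≠ 0 ∧ (p.1, p.2, P.eps) ∈ P.null}

/-- The set of fundamental elements of a pasture. -/
def Pasture.FE (P : Pasture) : Set P.carrier := {x | ∃ y, (x, y) ∈ P.FP}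

/-- A pasture morphism: a map of sets with `f 0 = 0`, whose restriction to the unit groups
is a group homomorphism, and which maps the nullset into the nullset. -/
def IsPastureMorphism (P₁ P₂ : Pasture) (f : P₁.carrier → P₂.carrier) : Prop :=
  f 0 = 0 ∧ (∀ x : P₁.carrier, x ≠ 0 → f x ≠ 0) ∧
    (∀ x y : P₁.carrier, x ≠ 0 → y ≠ 0 → f (x * y) = f x * f y) ∧
    ∀ a b c : P₁.carrier, (a, b, c) ∈ P₁.null → (f a, f b, f c) ∈ P₂.null

/-!
The conditions on `f` away from the nullset say exactly that `f` is a morphism of monoids with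
zero. A null triple with a zero entry is, up to permutation, `(a, ε a, 0)`, and a null triple
`(a, b, c)` without zero entries is the multiple `(c / ε) • (x, y, ε)` of a fundamental pair
`(x, y)`. So the nullset is recovered from `ε` and the fundamental pairs by permuting and scaling,
and a morphism of monoids with zero that fixes `ε` and preserves fundamental pairs respects
all of these operations.
-/

def MonoidWithZeroHom.ofMapMulOfNeZero {M₀ N₀ : Type*} [MonoidWithZero M₀] [Nontrivial M₀]
    [MonoidWithZero N₀] [IsLeftCancelMulZero N₀] (f : M₀ → N₀) (h0 : f 0 = 0)
    (hne : ∀ x, x ≠ 0 → f x ≠ 0)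
    (hmul : ∀ x y, x ≠ 0 → y ≠ 0 → f (x * y) = f x * f y) : M₀ →*₀ N₀ where
  toFun := f
  map_zero' := h0
  map_one' := by
    have h := hmul 1 1 one_ne_zero one_ne_zero
    rw [one_mul] at h
    exact (mul_eq_left₀ (hne 1 one_ne_zero)).mp h.symm
  map_mul' x y := by
    rcases eq_or_ne x 0 with rfl | hx
    · simp [h0]
    rcases eq_or_ne y 0 with rfl | hy
    · simp [h0]
    exact hmul x y hx hy

namespace Pasture

variable (P : Pasture)

lemma eps_spec : ((1 : P.carrier), P.eps, (0 : P.carrier)) ∈ P.null :=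
  P.epsilon_existsUnique.choose_spec.1

lemma eps_ne_zero : P.eps ≠ 0 := fun h => P.one_zero_zero_not_mem (h ▸ P.eps_spec)

variable {P}

lemma mem_null_zero_iff {a b : P.carrier} : (a, b, 0) ∈ P.null ↔ b = P.eps * a := by
  constructor
  · intro h
    rcases eq_or_ne a 0 with rfl | ha
    · rw [mul_zero]
      by_contra hb
      have h1 := P.scale_mem b⁻¹ (P.swap_left_mem h)
      rw [mul_inv_cancel₀ hb, zero_mul] at h1
      exact P.one_zero_zero_not_mem h1
    · have h1 := P.scale_mem a⁻¹ h
      rw [mul_inv_cancel₀ ha, zero_mul] at h1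
      have he : b * a⁻¹ = P.eps := P.epsilon_existsUnique.choose_spec.2 _ h1
      rw [← he, inv_mul_cancel_right₀ ha]
  · rintro rfl
    simpa [mul_comm a] using P.scale_mem a P.eps_spec

variable {P₁ P₂ : Pasture} (g : P₁.carrier →*₀ P₂.carrier) (heps : g P₁.eps = P₂.eps)
include heps

lemma map_mem_null_zero {a b : P₁.carrier} (h : (a, b, 0) ∈ P₁.null) :
    (g a, g b, 0) ∈ P₂.null := by
  rw [mem_null_zero_iff] at h ⊢
  rw [h, map_mul, heps]

lemma map_mem_null_of_ne_zero (hFP : ∀ x y, (x, y) ∈ P₁.FP → (g x, g y) ∈ P₂.FP)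
    {a b c : P₁.carrier} (ha : a ≠ 0) (hb : b ≠ 0) (hc : c ≠ 0) (h : (a, b, c) ∈ P₁.null) :
    (g a, g b, g c) ∈ P₂.null := by
  set q := P₁.eps / c
  have hq : q ≠ 0 := div_ne_zero P₁.eps_ne_zero hc
  have hcq : c * q = P₁.eps := mul_div_cancel₀ _ hc
  have hfund : (a * q, b * q) ∈ P₁.FP :=
    ⟨mul_ne_zero ha hq, mul_ne_zero hb hq, hcq ▸ P₁.scale_mem q h⟩
  have h' := P₂.scale_mem (g q)⁻¹ (hFP _ _ hfund).2.2
  rw [← heps, ← hcq] at h'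
  simpa only [map_mul, mul_inv_cancel_right₀ ((map_ne_zero g).2 hq)] using h'

lemma map_mem_null (hFP : ∀ x y, (x, y) ∈ P₁.FP → (g x, g y) ∈ P₂.FP)
    {a b c : P₁.carrier} (h : (a, b, c) ∈ P₁.null) : (g a, g b, g c) ∈ P₂.null := by
  rcases eq_or_ne c 0 with rfl | hc
  · exact map_zero g ▸ map_mem_null_zero g heps h
  rcases eq_or_ne b 0 with rfl | hb
  · exact map_zero g ▸ P₂.swap_right_mem (map_mem_null_zero g heps (P₁.swap_right_mem h))
  rcases eq_or_ne a 0 with rfl | ha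
  · have h' := map_mem_null_zero g heps (P₁.swap_right_mem (P₁.swap_left_mem h))
    exact map_zero g ▸ P₂.swap_left_mem (P₂.swap_right_mem h')
  exact map_mem_null_of_ne_zero g heps hFP ha hb hc h

end Pasture

/-- A set map `f : P₁ → P₂` is a pasture morphism if and only if `f(0) = 0`, `f(ε₁) = ε₂`,
`f` restricts to a group homomorphism `P₁^× → P₂^×`, and `(f x, f y) ∈ FP(P₂)` for every
`(x, y) ∈ FP(P₁)`. -/
theorem isPastureMorphism_iff (P₁ P₂ : Pasture) (f : P₁.carrier → P₂.carrier) :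
    IsPastureMorphism P₁ P₂ f ↔
      (f 0 = 0 ∧ f P₁.eps = P₂.eps ∧
        (∀ x : P₁.carrier, x ≠ 0 → f x ≠ 0) ∧
        (∀ x y : P₁.carrier, x ≠ 0 → y ≠ 0 → f (x * y) = f x * f y) ∧
        ∀ x y : P₁.carrier, (x, y) ∈ P₁.FP → (f x, f y) ∈ P₂.FP) := by
  constructor
  · rintro ⟨h0, hne, hmul, hnull⟩
    have hf1 : f 1 = 1 := map_one (MonoidWithZeroHom.ofMapMulOfNeZero f h0 hne hmul)
    have heps : f P₁.eps = P₂.eps := by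
      have h := hnull 1 P₁.eps 0 P₁.eps_spec
      rwa [hf1, h0, Pasture.mem_null_zero_iff, mul_one] at h
    exact ⟨h0, heps, hne, hmul, fun x y ⟨hx, hy, hxy⟩ =>
      ⟨hne x hx, hne y hy, heps ▸ hnull x y P₁.eps hxy⟩⟩
  · rintro ⟨h0, heps, hne, hmul, hFP⟩
    exact ⟨h0, hne, hmul, fun a b c =>
      Pasture.map_mem_null (MonoidWithZeroHom.ofMapMulOfNeZero f h0 hne hmul) heps hFP⟩
end

section
/- Let P be a pasture and suppose there exist x, y, z, w ∈ P× such that (x,y) ∈ FP(P), (x,z) ∈ FP(P), and (y·z⁻¹, w) ∈ FP(P). Then for every field k there is no pasture morphism P → k. -/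
/-- A field `k`, viewed as a pasture: the unit group is `k^×`, `ε = -1`, and the nullset
consists of all triples `(a, b, c)` with `a + b + c = 0`. -/
def Pasture.ofField (k : Type) [Field k] : Pasture where
  carrier := k
  null := {t : k × k × k | t.1 + t.2.1 + t.2.2 = 0}
  one_zero_zero_not_mem := by simp
  epsilon_existsUnique := by
    refine ⟨-1, by simp, fun y hy => ?_⟩
    have : (1 : k) + y + 0 = 0 := hy
    linear_combination this
  swap_left_mem := by
    intro a b c h
    have : a + b + c = 0 := h
    show b + a + c = 0
    linear_combination this
  swap_right_mem := by
    intro a b c h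
    have : a + b + c = 0 := h
    show a + c + b = 0
    linear_combination this
  scale_mem := by
    intro a b c p h
    have : a + b + c = 0 := h
    show a * p + b * p + c * p = 0
    linear_combination p * this

/-! A pasture morphism `f` to a field is multiplicative and sends `ε` to `-1`, so every fundamental
pair `(a, b)` satisfies `f a + f b = 1`. Hence `f y = 1 - f x = f z`, so `f (y z⁻¹) = 1`, and then
`f w = 1 - 1 = 0`, although `w ≠ 0`. -/

namespace Pasture

instance (k : Type) [Field k] : Field (ofField k).carrier := inferInstanceAs (Field k)

theorem one_eps_zero_mem (P : Pasture) : ((1 : P.carrier), P.eps, (0 : P.carrier)) ∈ P.null :=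
  P.epsilon_existsUnique.choose_spec.1

theorem eq_eps_of_mem {P : Pasture} {e : P.carrier}
    (h : ((1 : P.carrier), e, (0 : P.carrier)) ∈ P.null) : e = P.eps :=
  P.epsilon_existsUnique.unique h P.one_eps_zero_mem

theorem ofField_eps (k : Type) [Field k] : (ofField k).eps = -1 :=
  (eq_eps_of_mem (P := ofField k) (show (1 : k) + -1 + 0 = 0 by ring)).symm

end Pasture

namespace IsPastureMorphism

variable {P Q : Pasture} {f : P.carrier → Q.carrier}

theorem map_one (hf : IsPastureMorphism P Q f) : f 1 = 1 := by
  have h := hf.2.2.1 1 1 one_ne_zero one_ne_zero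
  rw [mul_one] at h
  exact (mul_eq_left₀ (hf.2.1 1 one_ne_zero)).mp h.symm

theorem map_mul (hf : IsPastureMorphism P Q f) (a b : P.carrier) : f (a * b) = f a * f b := by
  rcases eq_or_ne a 0 with rfl | ha
  · rw [zero_mul, hf.1, zero_mul]
  rcases eq_or_ne b 0 with rfl | hb
  · rw [mul_zero, hf.1, mul_zero]
  exact hf.2.2.1 a b ha hb

def toMonoidWithZeroHom (hf : IsPastureMorphism P Q f) : P.carrier →*₀ Q.carrier where
  toFun := f
  map_zero' := hf.1
  map_one' := hf.map_one
  map_mul' := hf.map_mul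

theorem map_div (hf : IsPastureMorphism P Q f) (a b : P.carrier) : f (a / b) = f a / f b :=
  map_div₀ hf.toMonoidWithZeroHom a b

theorem map_eps (hf : IsPastureMorphism P Q f) : f P.eps = Q.eps := by
  apply Pasture.eq_eps_of_mem
  simpa only [hf.map_one, hf.1] using hf.2.2.2 _ _ _ P.one_eps_zero_mem

theorem map_mem_FP (hf : IsPastureMorphism P Q f) {a b : P.carrier} (h : (a, b) ∈ P.FP) :
    (f a, f b) ∈ Q.FP := by
  obtain ⟨ha, hb, hab⟩ := h
  refine ⟨hf.2.1 a ha, hf.2.1 b hb, ?_⟩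
  simpa only [hf.map_eps] using hf.2.2.2 _ _ _ hab

theorem add_eq_one_of_mem_FP {k : Type} [Field k] {f : P.carrier → (Pasture.ofField k).carrier}
    (hf : IsPastureMorphism P (Pasture.ofField k) f) {a b : P.carrier} (h : (a, b) ∈ P.FP) :
    f a + f b = 1 := by
  have hab : f a + f b + -1 = 0 := Pasture.ofField_eps k ▸ (hf.map_mem_FP h).2.2
  linear_combination hab

end IsPastureMorphism

theorem no_morphism_to_field_general (P : Pasture) (x y z w : P.carrier)
    (h1 : (x, y) ∈ P.FP) (h2 : (x, z) ∈ P.FP) (h3 : (y * z⁻¹, w) ∈ P.FP) :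
    ∀ (k : Type) [Field k],
      ¬ ∃ f : P.carrier → (Pasture.ofField k).carrier, IsPastureMorphism P (Pasture.ofField k) f := by
  rintro k _ ⟨f, hf⟩
  have hxy : f x + f y = 1 := hf.add_eq_one_of_mem_FP h1
  have hxz : f x + f z = 1 := hf.add_eq_one_of_mem_FP h2
  have hyzw : f (y * z⁻¹) + f w = 1 := hf.add_eq_one_of_mem_FP h3
  have hyz : f (y * z⁻¹) = 1 := by
    rw [← div_eq_mul_inv, hf.map_div, div_eq_one_iff_eq (hf.2.1 z h2.2.1)]
    linear_combination hxy - hxz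
  exact hf.2.1 w h3.2.1 (by linear_combination hyzw - hyz)

/-- If a pasture `P` contains units `x, y, z, w` with `(x, y) ∈ FP(P)`, `(x, z) ∈ FP(P)` and
`(y·z⁻¹, w) ∈ FP(P)`, then there is no pasture morphism from `P` to any field. -/
theorem no_morphism_to_field (P : Pasture) (x y z w : P.carrier)
    (hx : x ≠ 0) (hy : y ≠ 0) (hz : z ≠ 0) (hw : w ≠ 0)
    (h1 : (x, y) ∈ P.FP) (h2 : (x, z) ∈ P.FP) (h3 : (y * z⁻¹, w) ∈ P.FP) :
    ∀ (k : Type) [Field k],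
      ¬ ∃ f : P.carrier → (Pasture.ofField k).carrier, IsPastureMorphism P (Pasture.ofField k) f :=
  no_morphism_to_field_general P x y z w h1 h2 h3
end

section
/- Let F be a spanning forest of the bipartite graph Γ(M,B₀). Then the subgroup of ℤ^E generated by the vectors {χ_B − χ_{B₀} : B ∈ 𝓑} is equal to the subgroup generated by the vectors {e_b − e_a : {a,b} is an edge of F with a ∈ B₀ and b ∈ E∖B₀}. -/
/-- The bipartite exchange graph `Γ(M, B₀)` on the ground set of `M`: `a ∈ B₀` and
`b ∉ B₀` are adjacent if and only if `(B₀ ∖ {a}) ∪ {b}` is a base of `M`. -/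
def exchangeGraph {α : Type*} (M : Matroid α) (B₀ : Set α) : SimpleGraph α where
  Adj a b := (a ∈ B₀ ∧ b ∉ B₀ ∧ M.IsBase (insert b (B₀ \ {a}))) ∨
             (b ∈ B₀ ∧ a ∉ B₀ ∧ M.IsBase (insert a (B₀ \ {b})))
  symm := ⟨by intro a b h; tauto⟩
  loopless := ⟨by rintro a (⟨h1, h2, -⟩ | ⟨h1, h2, -⟩) <;> exact h2 h1⟩

/-!
Each generator `e_b - e_a` of the forest side is `χ_{B₀ - a + b} - χ_{B₀}`. Conversely, by symmetric
basis exchange every base `B ≠ B₀` has a base `B' = B - b + a` one step closer to `B₀` such that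
`{a, b}` is an edge of `Γ(M, B₀)`, so `χ_B - χ_{B₀}` is a sum of vectors `e_b - e_a` over edges of
`Γ(M, B₀)`. A maximal forest has the same connected components as `Γ(M, B₀)`, so each of these
telescopes along the path in `F` from `a` to `b`.
-/

namespace Set

variable {α : Type*} [DecidableEq α] {R : Type*} [AddCommGroupWithOne R]

lemma indicator_insert_sdiff_singleton {B : Set α} {a b : α} (ha : a ∉ B) (hb : b ∈ B) :
    (insert a (B \ {b})).indicator (1 : α → R) =
      B.indicator 1 + (Pi.single a 1 - Pi.single b 1) := by
  ext x
  by_cases hxa : x = a <;> by_cases hxb : x = b <;> by_cases hxB : x ∈ B <;> simp_all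

end Set

namespace Matroid

open Set

variable {α : Type*} {M : Matroid α}

section Exchange

variable {B₁ B₂ : Set α} {e : α}

theorem IsBase.exists_symm_exchange (hB₁ : M.IsBase B₁) (hB₂ : M.IsBase B₂) (he : e ∈ B₁ \ B₂) :
    ∃ f ∈ B₂ \ B₁, M.IsBase (insert f (B₁ \ {e})) ∧ M.IsBase (insert e (B₂ \ {f})) := by
  have hC := hB₂.fundCircuit_isCircuit (hB₁.subset_ground he.1) he.2
  have hK := fundCocircuit_isCocircuit he.1 hB₁
  -- A circuit and a cocircuit never meet in exactly one element, so they share some `f ≠ e`.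
  obtain ⟨f, ⟨hfC, hfK⟩, hfe⟩ := (hC.isCocircuit_inter_nontrivial hK
    ⟨e, M.mem_fundCircuit e B₂, M.mem_fundCocircuit e B₁⟩).exists_ne e
  have hfB₂ : f ∈ B₂ := by simpa [hfe] using M.fundCircuit_subset_insert e B₂ hfC
  have hfB₁ : f ∉ B₁ := fun hf ↦ hfe <| by
    simpa using (M.fundCocircuit_inter_eq he.1).subset ⟨hfK, hf⟩
  rw [hB₁.mem_fundCocircuit_iff_mem_fundCircuit, hB₁.indep.mem_fundCircuit_iff
    (by rw [hB₁.closure_eq]; exact hB₂.subset_ground hfB₂) hfB₁,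
    ← insert_sdiff_singleton_comm hfe] at hfK
  rw [hB₂.indep.mem_fundCircuit_iff (by rw [hB₂.closure_eq]; exact hB₁.subset_ground he.1) he.2,
    ← insert_sdiff_singleton_comm hfe.symm] at hfC
  exact ⟨f, ⟨hfB₂, hfB₁⟩, hB₁.exchange_isBase_of_indep hfB₁ hfK,
    hB₂.exchange_isBase_of_indep he.2 hfC⟩

end Exchange

variable [DecidableEq α] {R : Type*} [AddCommGroupWithOne R] [M.RankFinite] {B₀ B : Set α}
  {S : AddSubgroup (α → R)}

theorem IsBase.indicator_sub_indicator_mem (hB₀ : M.IsBase B₀)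
    (hexch : ∀ ⦃a b⦄, a ∈ B₀ → b ∉ B₀ → M.IsBase (insert b (B₀ \ {a})) →
      Pi.single b 1 - Pi.single a 1 ∈ S)
    (hB : M.IsBase B) : B.indicator 1 - B₀.indicator 1 ∈ S := by
  obtain ⟨n, hn⟩ : ∃ n, (B \ B₀).ncard = n := ⟨_, rfl⟩
  induction n generalizing B with
  | zero =>
    rw [ncard_eq_zero hB.finite.sdiff, sdiff_eq_empty] at hn
    simp [hB.eq_of_subset_isBase hB₀ hn]
  | succ n ih =>
    obtain ⟨b, hb⟩ := nonempty_of_ncard_ne_zero (hn.trans_ne n.succ_ne_zero)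
    obtain ⟨a, ha, hB', hB₀'⟩ := hB.exists_symm_exchange hB₀ hb
    have hcard : (insert a (B \ {b}) \ B₀).ncard = n := by
      rw [insert_sdiff_of_mem _ ha.1, sdiff_sdiff_comm, ncard_sdiff_singleton_of_mem hb, hn,
        Nat.add_sub_cancel]
    convert S.add_mem (ih hB' hcard) (hexch ha.1 hb.2 hB₀') using 1
    rw [indicator_insert_sdiff_singleton ha.2 hb.1]
    abel

end Matroid

namespace SimpleGraph

open Set

variable {V : Type*} {G : SimpleGraph V} {F : Set (Sym2 V)}

lemma maximal_fromEdgeSet_isAcyclic (hFG : F ⊆ G.edgeSet) (hF : (fromEdgeSet F).IsAcyclic)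
    (hFmax : ∀ F' : Set (Sym2 V), F ⊆ F' → F' ⊆ G.edgeSet → (fromEdgeSet F').IsAcyclic → F' = F) :
    Maximal (fun H ↦ H ≤ G ∧ H.IsAcyclic) (fromEdgeSet F) := by
  have hFeq : (fromEdgeSet F).edgeSet = F := by
    rw [edgeSet_fromEdgeSet, sdiff_eq_left]
    exact subset_compl_iff_disjoint_right.1 (hFG.trans G.edgeSet_subset_compl_diagSet)
  refine ⟨⟨(fromEdgeSet_le _).2 (sdiff_subset.trans hFG), hF⟩, fun H ⟨hHG, hH⟩ hFH ↦ ?_⟩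
  refine (le_fromEdgeSet_iff _ _).2
    (hFmax H.edgeSet (hFeq ▸ edgeSet_mono hFH) (edgeSet_mono hHG) ?_).le
  rwa [fromEdgeSet_edgeSet]

lemma Reachable.sub_mem {A : Type*} [AddGroup A] {S : AddSubgroup A} {f : V → A}
    (hadj : ∀ ⦃u v⦄, G.Adj u v → f v - f u ∈ S) {u v : V} (huv : G.Reachable u v) :
    f v - f u ∈ S := by
  obtain ⟨p⟩ := huv
  induction p with
  | nil => simp
  | cons h _ ih => simpa using S.add_mem ih (hadj h)

end SimpleGraph

theorem spanning_forest_generates_general {α : Type*} [Fintype α] [DecidableEq α]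
    (M : Matroid α) (B₀ : Set α) (hB₀ : M.IsBase B₀)
    (F : Set (Sym2 α)) (hFsub : F ⊆ (exchangeGraph M B₀).edgeSet)
    (hFacyclic : (SimpleGraph.fromEdgeSet F).IsAcyclic)
    (hFmax : ∀ F' : Set (Sym2 α), F ⊆ F' → F' ⊆ (exchangeGraph M B₀).edgeSet →
      (SimpleGraph.fromEdgeSet F').IsAcyclic → F' = F) :
    AddSubgroup.closure
        {v : α → ℤ | ∃ B : Set α, M.IsBase B ∧
          v = B.indicator (1 : α → ℤ) - B₀.indicator (1 : α → ℤ)} =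
      AddSubgroup.closure
        {v : α → ℤ | ∃ a b : α, a ∈ B₀ ∧ b ∉ B₀ ∧ s(a, b) ∈ F ∧
          v = Pi.single b 1 - Pi.single a 1} := by
  set S := AddSubgroup.closure {v : α → ℤ | ∃ a b : α, a ∈ B₀ ∧ b ∉ B₀ ∧ s(a, b) ∈ F ∧
    v = Pi.single b 1 - Pi.single a 1}
  have hforest ⦃u v : α⦄ (huv : (SimpleGraph.fromEdgeSet F).Adj u v) :
      Pi.single v 1 - Pi.single u 1 ∈ S := by
    obtain ⟨huvF, -⟩ := huv
    rcases hFsub huvF with ⟨hu, hv, -⟩ | ⟨hv, hu, -⟩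
    · exact AddSubgroup.subset_closure ⟨u, v, hu, hv, huvF, rfl⟩
    · simpa using S.neg_mem (AddSubgroup.subset_closure ⟨v, u, hv, hu, Sym2.eq_swap ▸ huvF, rfl⟩)
  have hreach := SimpleGraph.reachable_eq_of_maximal_isAcyclic _
    (SimpleGraph.maximal_fromEdgeSet_isAcyclic hFsub hFacyclic hFmax)
  have hexch ⦃a b : α⦄ (ha : a ∈ B₀) (hb : b ∉ B₀) (hab : M.IsBase (insert b (B₀ \ {a}))) :
      Pi.single b 1 - Pi.single a 1 ∈ S :=
    (hreach ▸ SimpleGraph.Adj.reachable (G := exchangeGraph M B₀) (.inl ⟨ha, hb, hab⟩)).sub_mem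
      hforest
  refine le_antisymm (AddSubgroup.closure_le _ |>.2 ?_) (AddSubgroup.closure_le _ |>.2 ?_)
  · rintro _ ⟨B, hB, rfl⟩
    exact hB₀.indicator_sub_indicator_mem hexch hB
  · rintro _ ⟨a, b, ha, hb, habF, rfl⟩
    obtain ⟨-, -, hab⟩ | ⟨hb', -⟩ := hFsub habF
    · exact AddSubgroup.subset_closure
        ⟨_, hab, by rw [Set.indicator_insert_sdiff_singleton hb ha, add_sub_cancel_left]⟩
    · exact absurd hb' hb

/-- Let `F` be a spanning forest (a maximal acyclic set of edges) of the bipartite exchange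
graph `Γ(M, B₀)`. Then the subgroup of `ℤ^E` generated by `{χ_B − χ_{B₀} : B a base}` equals
the subgroup generated by `{e_b − e_a : {a,b} ∈ F, a ∈ B₀, b ∉ B₀}`. -/
theorem spanning_forest_generates {α : Type*} [Fintype α] [DecidableEq α]
    (M : Matroid α) (hE : M.E = Set.univ) (B₀ : Set α) (hB₀ : M.IsBase B₀)
    (F : Set (Sym2 α)) (hFsub : F ⊆ (exchangeGraph M B₀).edgeSet)
    (hFacyclic : (SimpleGraph.fromEdgeSet F).IsAcyclic)
    (hFmax : ∀ F' : Set (Sym2 α), F ⊆ F' → F' ⊆ (exchangeGraph M B₀).edgeSet →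
      (SimpleGraph.fromEdgeSet F').IsAcyclic → F' = F) :
    AddSubgroup.closure
        {v : α → ℤ | ∃ B : Set α, M.IsBase B ∧
          v = B.indicator (1 : α → ℤ) - B₀.indicator (1 : α → ℤ)} =
      AddSubgroup.closure
        {v : α → ℤ | ∃ a b : α, a ∈ B₀ ∧ b ∉ B₀ ∧ s(a, b) ∈ F ∧
          v = Pi.single b 1 - Pi.single a 1} :=
  spanning_forest_generates_general M B₀ hB₀ F hFsub hFacyclic hFmax
end

section
/- For every base B ∈ 𝓑 of M, the vector χ_B − χ_{B₀} lies in the subgroup of ℤ^E generated by the vectors {e_b − e_a : a ∈ B₀, b ∈ E∖B₀, (B₀∖{a}) ∪ {b} ∈ 𝓑}. -/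
/-!
Induction on `|B \ B₀|`. For `b ∈ B \ B₀`, the fundamental circuit of `b` with respect to `B₀`
and the fundamental cocircuit of `b` with respect to `B` both contain `b`; since a circuit and
a cocircuit never meet in exactly one element, they share a second element `a ∈ B₀ \ B`. Then
both `B₀ - a + b` and `B' = B - b + a` are bases, and
`χ_B - χ_{B₀} = (χ_{B'} - χ_{B₀}) + (e_b - e_a)` with `e_b - e_a` a generator and
`|B' \ B₀| < |B \ B₀|`.
-/

open Set

lemma Set.indicator_insert_sdiff_singleton_add {α R : Type*} [DecidableEq α]
    [AddCommGroupWithOne R] {B : Set α} {a b : α} (hbB : b ∈ B) (haB : a ∉ B) :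
    (insert a (B \ {b})).indicator (1 : α → R) + (Pi.single b 1 - Pi.single a 1) =
      B.indicator 1 := by
  have hab : a ≠ b := by rintro rfl; exact haB hbB
  ext x
  obtain rfl | hxa := eq_or_ne x a
  · simp [hab, haB]
  obtain rfl | hxb := eq_or_ne x b
  · simp [hxa, hbB]
  by_cases hxB : x ∈ B <;> simp [hxa, hxb, hxB]

namespace Matroid

variable {α : Type*} {M : Matroid α} {B₀ : Set α} {b : α}

lemma IsBase.exists_symm_exchange_s11 {B : Set α} (hB : M.IsBase B) (hB₀ : M.IsBase B₀)
    (hb : b ∈ B \ B₀) :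
    ∃ a ∈ B₀ \ B, M.IsBase (insert a (B \ {b})) ∧ M.IsBase (insert b (B₀ \ {a})) := by
  have hbE : b ∈ M.E := hB.subset_ground hb.1
  obtain ⟨a, ⟨haC, haK⟩, hab⟩ : ∃ a ∈ M.fundCircuit b B₀ ∩ M.fundCocircuit b B, a ≠ b := by
    by_contra! h
    exact (hB₀.fundCircuit_isCircuit hbE hb.2).inter_isCocircuit_ne_singleton
      (fundCocircuit_isCocircuit hb.1 hB) <|
      eq_singleton_iff_unique_mem.2 ⟨⟨mem_fundCircuit .., mem_fundCocircuit ..⟩, h⟩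
  have haB₀ : a ∈ B₀ := by simpa [hab] using M.fundCircuit_subset_insert b B₀ haC
  obtain ⟨haE, haB⟩ : a ∈ M.E \ B := by
    simpa [hab] using M.fundCocircuit_subset_insert_compl b B haK
  rw [hB.mem_fundCocircuit_iff_mem_fundCircuit,
    hB.indep.mem_fundCircuit_iff (by rwa [hB.closure_eq]) haB] at haK
  rw [hB₀.indep.mem_fundCircuit_iff (by rwa [hB₀.closure_eq]) hb.2] at haC
  refine ⟨a, ⟨haB₀, haB⟩, hB.exchange_isBase_of_indep haB ?_,
    hB₀.exchange_isBase_of_indep hb.2 ?_⟩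
  · rwa [insert_sdiff_singleton_comm hab]
  · rwa [insert_sdiff_singleton_comm hab.symm]

theorem IsBase.indicator_sub_indicator_mem_closure_exchange {R : Type*} [DecidableEq α]
    [AddCommGroupWithOne R] [M.RankFinite] {B : Set α} (hB : M.IsBase B)
    (hB₀ : M.IsBase B₀) :
    B.indicator (1 : α → R) - B₀.indicator 1 ∈
      AddSubgroup.closure {v : α → R | ∃ a b : α, a ∈ B₀ ∧ b ∉ B₀ ∧
        M.IsBase (insert b (B₀ \ {a})) ∧ v = Pi.single b 1 - Pi.single a 1} := by
  obtain hBB₀ | ⟨b, hb⟩ := (B \ B₀).eq_empty_or_nonempty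
  · rw [hB.eq_of_subset_isBase hB₀ (sdiff_eq_empty.1 hBB₀), sub_self]
    exact zero_mem _
  obtain ⟨a, ⟨haB₀, haB⟩, hB', hB₀'⟩ := hB.exists_symm_exchange_s11 hB₀ hb
  have hlt : (insert a (B \ {b}) \ B₀).ncard < (B \ B₀).ncard := by
    refine (ncard_le_ncard ?_ hB.finite.sdiff.sdiff).trans_lt
      (ncard_sdiff_singleton_lt_of_mem hb hB.finite.sdiff)
    rintro x ⟨rfl | ⟨hxB, hxb⟩, hxB₀⟩
    exacts [(hxB₀ haB₀).elim, ⟨⟨hxB, hxB₀⟩, hxb⟩]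
  rw [← indicator_insert_sdiff_singleton_add hb.1 haB, add_sub_right_comm]
  exact add_mem (hB'.indicator_sub_indicator_mem_closure_exchange hB₀)
    (AddSubgroup.subset_closure ⟨a, b, haB₀, hb.2, hB₀', rfl⟩)
termination_by (B \ B₀).ncard

end Matroid

theorem indicator_sub_mem_exchange_closure_general {α : Type*} [Fintype α] [DecidableEq α]
    (M : Matroid α)
    (B₀ : Set α) (hB₀ : M.IsBase B₀) (B : Set α) (hB : M.IsBase B) :
    (B.indicator (1 : α → ℤ) - B₀.indicator (1 : α → ℤ)) ∈
      AddSubgroup.closure {v : α → ℤ | ∃ a b : α, a ∈ B₀ ∧ b ∉ B₀ ∧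
        M.IsBase (insert b (B₀ \ {a})) ∧ v = Pi.single b 1 - Pi.single a 1} :=
  hB.indicator_sub_indicator_mem_closure_exchange hB₀

/-- For every base `B` of a matroid `M` on a finite ground set with fixed base `B₀`, the
vector `χ_B − χ_{B₀} ∈ ℤ^E` lies in the subgroup of `ℤ^E` generated by the vectors
`e_b − e_a` for `a ∈ B₀`, `b ∉ B₀` with `(B₀ ∖ {a}) ∪ {b}` a base. -/
theorem indicator_sub_mem_exchange_closure {α : Type*} [Fintype α] [DecidableEq α]
    (M : Matroid α) (hE : M.E = Set.univ)
    (B₀ : Set α) (hB₀ : M.IsBase B₀) (B : Set α) (hB : M.IsBase B) :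
    (B.indicator (1 : α → ℤ) - B₀.indicator (1 : α → ℤ)) ∈
      AddSubgroup.closure {v : α → ℤ | ∃ a b : α, a ∈ B₀ ∧ b ∉ B₀ ∧
        M.IsBase (insert b (B₀ \ {a})) ∧ v = Pi.single b 1 - Pi.single a 1} :=
  indicator_sub_mem_exchange_closure_general M B₀ hB₀ B hB
end

section
/- Let M be a matroid of rank r on a finite ground set E with set of bases 𝓑, let J ⊆ E with |J| = r − 2, and let e₁, e₂, e₃, e₄ be four distinct elements of E∖J. If J∪{e₁,e₂} ∈ 𝓑 and J∪{e₃,e₄} ∈ 𝓑, then either (J∪{e₁,e₃} ∈ 𝓑 and J∪{e₂,e₄} ∈ 𝓑) or (J∪{e₁,e₄} ∈ 𝓑 and J∪{e₂,e₃} ∈ 𝓑). (This is the 3-term Grassmann–Plücker relation over the Krasner hyperfield, showing every matroid has a canonical representation over 𝕂.) -/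
/-!
Exchanging `eᵢ` out of whichever of the bases `J ∪ {e₁, e₂}`, `J ∪ {e₃, e₄}` contains it shows
that its partner forms a base with `J` and at least one element of the other pair. These four
disjunctions alone force one of the two required pairs of bases.
-/

namespace Matroid

variable {α : Type*} {M : Matroid α} {J : Set α} {a b c d : α}

theorem IsBase.exchange_pair (hB₁ : M.IsBase (J ∪ {a, b})) (hB₂ : M.IsBase (J ∪ {c, d}))
    (haJ : a ∉ J) (hab : a ≠ b) (hac : a ≠ c) (had : a ≠ d) :
    M.IsBase (J ∪ {b, c}) ∨ M.IsBase (J ∪ {b, d}) := by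
  have ha : a ∈ (J ∪ {a, b}) \ (J ∪ {c, d}) := by simp [haJ, hac, had]
  obtain ⟨y, hy, hyB⟩ := hB₁.exchange hB₂ ha
  have hswap : insert y ((J ∪ {a, b}) \ {a}) = J ∪ {b, y} := by
    ext x
    simp only [Set.mem_insert_iff, Set.mem_sdiff, Set.mem_union, Set.mem_singleton_iff]
    grind
  have hy' : y = c ∨ y = d := by
    simp only [Set.mem_sdiff, Set.mem_union, Set.mem_insert_iff, Set.mem_singleton_iff] at hy
    tauto
  rw [hswap] at hyB
  rcases hy' with rfl | rfl
  · exact Or.inl hyB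
  · exact Or.inr hyB

end Matroid

theorem gp_relation_krasner_general {α : Type*} (M : Matroid α)
    (J : Set α)
    (e₁ e₂ e₃ e₄ : α)
    (he₁ : e₁ ∈ M.E \ J) (he₂ : e₂ ∈ M.E \ J) (he₃ : e₃ ∈ M.E \ J) (he₄ : e₄ ∈ M.E \ J)
    (h12ne : e₁ ≠ e₂) (h13ne : e₁ ≠ e₃) (h14ne : e₁ ≠ e₄)
    (h23ne : e₂ ≠ e₃) (h24ne : e₂ ≠ e₄) (h34ne : e₃ ≠ e₄)
    (h12 : M.IsBase (J ∪ {e₁, e₂})) (h34 : M.IsBase (J ∪ {e₃, e₄})) :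
    (M.IsBase (J ∪ {e₁, e₃}) ∧ M.IsBase (J ∪ {e₂, e₄})) ∨
      (M.IsBase (J ∪ {e₁, e₄}) ∧ M.IsBase (J ∪ {e₂, e₃})) := by
  have h21 : M.IsBase (J ∪ {e₂, e₁}) := by rwa [Set.pair_comm]
  have h43 : M.IsBase (J ∪ {e₄, e₃}) := by rwa [Set.pair_comm]
  have H1 := h12.exchange_pair h34 he₁.2 h12ne h13ne h14ne
  have H2 := h21.exchange_pair h34 he₂.2 h12ne.symm h23ne h24ne
  have H3 := h34.exchange_pair h12 he₃.2 h34ne h13ne.symm h23ne.symm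
  have H4 := h43.exchange_pair h12 he₄.2 h34ne.symm h14ne.symm h24ne.symm
  simp only [Set.pair_comm e₄ e₁, Set.pair_comm e₄ e₂, Set.pair_comm e₃ e₁,
    Set.pair_comm e₃ e₂] at H3 H4
  tauto

/-- The 3-term Grassmann–Plücker relation over the Krasner hyperfield: if `M` is a matroid
of rank `r` on a finite ground set `E`, `J ⊆ E` has `r − 2` elements, and `e₁, e₂, e₃, e₄`
are distinct elements of `E ∖ J` with `J ∪ {e₁, e₂}` and `J ∪ {e₃, e₄}` bases, then either
`J ∪ {e₁, e₃}` and `J ∪ {e₂, e₄}` are both bases, or `J ∪ {e₁, e₄}` and `J ∪ {e₂, e₃}` are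
both bases. -/
theorem gp_relation_krasner {α : Type*} (M : Matroid α) (hfin : M.E.Finite) (r : ℕ)
    (hrank : ∀ B : Set α, M.IsBase B → B.encard = (r : ℕ∞))
    (J : Set α) (hJ : J ⊆ M.E) (hJcard : J.encard + 2 = (r : ℕ∞))
    (e₁ e₂ e₃ e₄ : α)
    (he₁ : e₁ ∈ M.E \ J) (he₂ : e₂ ∈ M.E \ J) (he₃ : e₃ ∈ M.E \ J) (he₄ : e₄ ∈ M.E \ J)
    (h12ne : e₁ ≠ e₂) (h13ne : e₁ ≠ e₃) (h14ne : e₁ ≠ e₄)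
    (h23ne : e₂ ≠ e₃) (h24ne : e₂ ≠ e₄) (h34ne : e₃ ≠ e₄)
    (h12 : M.IsBase (J ∪ {e₁, e₂})) (h34 : M.IsBase (J ∪ {e₃, e₄})) :
    (M.IsBase (J ∪ {e₁, e₃}) ∧ M.IsBase (J ∪ {e₂, e₄})) ∨
      (M.IsBase (J ∪ {e₁, e₄}) ∧ M.IsBase (J ∪ {e₂, e₃})) :=
  gp_relation_krasner_general M J e₁ e₂ e₃ e₄ he₁ he₂ he₃ he₄ h12ne h13ne h14ne h23ne h24ne h34ne
    h12 h34
end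

section
/- For any matroid M of rank r on [n] = {0,…,n−1} and any two bases B₀, B₀' of M, the Tutte groups G/R(M,B₀) and G/R(M,B₀') are isomorphic as abelian groups; that is, up to isomorphism the Tutte group 𝕋_M is independent of the choice of basis B₀. -/
/-- The number of inversions of the sequence obtained by listing the elements of `I` in
increasing order followed by `ki` and `kj`; its parity is the sign of the permutation
`σ_{ij}` bringing this sequence into increasing order. -/
noncomputable def invCount {n : ℕ} (I : Set (Fin n)) (ki kj : Fin n) : ℕ :=
  {x ∈ I | ki < x}.ncard + {x ∈ I | kj < x}.ncard + (if kj < ki then 1 else 0)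

/-- The subgroup `R(M, B₀)` of the free abelian group `G` on the symbols
`{ε} ∪ {X_B : B a base of M}` (with `ε` encoded as `none` and `X_B` as `some B`):
it is generated by `ε²` (additively `2 • ε`), `X_{B₀}`, and all cross-ratios
`Cr(I, k₁, k₂, k₃, k₄) = ε^{sgn(σ₁₃)+sgn(σ₂₄)+sgn(σ₁₄)+sgn(σ₂₃)} ·
X_{I∪{k₁,k₃}} · X_{I∪{k₂,k₄}} · X_{I∪{k₁,k₄}}⁻¹ · X_{I∪{k₂,k₃}}⁻¹`
with `I` of size `r − 2`, all four subscripts bases, and `I ∪ {k₁, k₂}` not a base.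
The Tutte group of `M` with respect to `B₀` is the quotient `G ⧸ R(M, B₀)`. -/
noncomputable def tutteRelations {n : ℕ} (M : Matroid (Fin n)) (r : ℕ)
    (B₀ : {B : Set (Fin n) // M.IsBase B}) :
    AddSubgroup (FreeAbelianGroup (Option {B : Set (Fin n) // M.IsBase B})) :=
  AddSubgroup.closure
    ({(2 : ℤ) • FreeAbelianGroup.of (none : Option {B : Set (Fin n) // M.IsBase B}),
      FreeAbelianGroup.of (some B₀)} ∪
     {g | ∃ (I : Set (Fin n)) (k₁ k₂ k₃ k₄ : Fin n)
            (h13 : M.IsBase (I ∪ {k₁, k₃})) (h24 : M.IsBase (I ∪ {k₂, k₄}))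
            (h14 : M.IsBase (I ∪ {k₁, k₄})) (h23 : M.IsBase (I ∪ {k₂, k₃})),
          I.encard + 2 = (r : ℕ∞) ∧ ¬ M.IsBase (I ∪ {k₁, k₂}) ∧
          g = ((invCount I k₁ k₃ + invCount I k₂ k₄ + invCount I k₁ k₄ + invCount I k₂ k₃) % 2) •
                FreeAbelianGroup.of (none : Option {B : Set (Fin n) // M.IsBase B})
              + FreeAbelianGroup.of (some ⟨I ∪ {k₁, k₃}, h13⟩)
              + FreeAbelianGroup.of (some ⟨I ∪ {k₂, k₄}, h24⟩)
              - FreeAbelianGroup.of (some ⟨I ∪ {k₁, k₄}, h14⟩)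
              - FreeAbelianGroup.of (some ⟨I ∪ {k₂, k₃}, h23⟩)})

/-! The automorphism of `G` fixing `ε` and sending `X_B ↦ X_B · X_{B₀'} · X_{B₀}⁻¹` sends
`X_{B₀}` to `X_{B₀'}` and fixes every cross-ratio, since a cross-ratio has two factors `X_B`
in the numerator and two in the denominator. Hence it carries `R(M, B₀)` onto `R(M, B₀')`. -/

namespace FreeAbelianGroup

variable {α : Type*}

noncomputable def shiftSome (a b : α) :
    FreeAbelianGroup (Option α) →+ FreeAbelianGroup (Option α) :=
  lift fun o => o.elim (of none) fun c => of (some c) + (of (some a) - of (some b))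

@[simp] lemma shiftSome_of_none (a b : α) : shiftSome a b (of none) = of none := by
  simp [shiftSome]

@[simp] lemma shiftSome_of_some (a b c : α) :
    shiftSome a b (of (some c)) = of (some c) + (of (some a) - of (some b)) := by
  simp [shiftSome]

lemma shiftSome_comp_shiftSome (a b : α) :
    (shiftSome a b).comp (shiftSome b a) = AddMonoidHom.id _ :=
  lift_ext _ _ fun o => by
    cases o with
    | none => simp
    | some c =>
      simp only [AddMonoidHom.comp_apply, AddMonoidHom.id_apply, shiftSome_of_some, map_add,
        map_sub]
      abel

noncomputable def shiftSomeEquiv (a b : α) :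
    FreeAbelianGroup (Option α) ≃+ FreeAbelianGroup (Option α) :=
  (shiftSome a b).toAddEquiv (shiftSome b a) (shiftSome_comp_shiftSome b a)
    (shiftSome_comp_shiftSome a b)

lemma shiftSome_balanced (a b c₁ c₂ c₃ c₄ : α) (k : ℕ) :
    shiftSome a b (k • of none + of (some c₁) + of (some c₂) - of (some c₃) - of (some c₄)) =
      k • of none + of (some c₁) + of (some c₂) - of (some c₃) - of (some c₄) := by
  simp only [map_add, map_sub, map_nsmul, shiftSome_of_none, shiftSome_of_some]
  abel

end FreeAbelianGroup

open FreeAbelianGroup in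
lemma tutteRelations_map_shiftSome {n : ℕ} (M : Matroid (Fin n)) (r : ℕ)
    (B₀ B₀' : {B : Set (Fin n) // M.IsBase B}) :
    (tutteRelations M r B₀).map (shiftSome B₀' B₀) = tutteRelations M r B₀' := by
  rw [tutteRelations, tutteRelations, AddMonoidHom.map_closure, Set.image_union, Set.image_pair,
    map_zsmul, shiftSome_of_none, shiftSome_of_some, add_sub_cancel]
  congr 2
  rw [Set.image_congr (g := id), Set.image_id]
  rintro _ ⟨I, k₁, k₂, k₃, k₄, _, _, _, _, -, -, rfl⟩
  exact shiftSome_balanced _ _ _ _ _ _ _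

theorem tutteGroup_independent_of_base_general {n : ℕ} (M : Matroid (Fin n)) (r : ℕ)
    (B₀ B₀' : {B : Set (Fin n) // M.IsBase B}) :
    Nonempty
      ((FreeAbelianGroup (Option {B : Set (Fin n) // M.IsBase B}) ⧸ tutteRelations M r B₀) ≃+
       (FreeAbelianGroup (Option {B : Set (Fin n) // M.IsBase B}) ⧸ tutteRelations M r B₀')) :=
  ⟨QuotientAddGroup.congr _ _ (FreeAbelianGroup.shiftSomeEquiv B₀' B₀)
    (tutteRelations_map_shiftSome M r B₀ B₀')⟩

/-- For a matroid `M` of rank `r` on `[n] = {0, …, n−1}` and any two bases `B₀, B₀'`, the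
Tutte groups `G ⧸ R(M, B₀)` and `G ⧸ R(M, B₀')` are isomorphic as abelian groups: up to
isomorphism the Tutte group `𝕋_M` does not depend on the choice of base. -/
theorem tutteGroup_independent_of_base {n : ℕ} (M : Matroid (Fin n))
    (hE : M.E = Set.univ) (r : ℕ)
    (hrank : ∀ B : Set (Fin n), M.IsBase B → B.encard = (r : ℕ∞))
    (B₀ B₀' : {B : Set (Fin n) // M.IsBase B}) :
    Nonempty
      ((FreeAbelianGroup (Option {B : Set (Fin n) // M.IsBase B}) ⧸ tutteRelations M r B₀) ≃+
       (FreeAbelianGroup (Option {B : Set (Fin n) // M.IsBase B}) ⧸ tutteRelations M r B₀')) :=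
  tutteGroup_independent_of_base_general M r B₀ B₀'
end
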